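/- Let (u, q_1,…,q_N, r_1,…,r_N) solve the KPESCS and let (g, V, R_1,…,R_N) be an adjoint eigenfunction datum for this solution with g nowhere vanishing. Then the tuple (ũ, q̃_1,…,q̃_N, r̃_1,…,r̃_N) defined by ũ := u + 2(g_x/g)_x, q̃_j := R_j/g, and r̃_j := −g·(r_j/g)_x again solves the KPESCS. (This is the auto-Bäcklund transformation T_2[g] of the KP hierarchy with self-consistent sources, in the case k=2, n=3.) -/

import Mathlib

noncomputable section

open Finset

abbrev Pt3 : Type := ℝ × ℝ × ℝ

/-- partial derivative in the first coordinate `x`. -/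
def px (F : Pt3 → ℝ) : Pt3 → ℝ := fun p => deriv (fun s => F (s, p.2.1, p.2.2)) p.1

/-- partial derivative in the second coordinate `y`. -/
def py (F : Pt3 → ℝ) : Pt3 → ℝ := fun p => deriv (fun s => F (p.1, s, p.2.2)) p.2.1

/-- partial derivative in the third coordinate `t`. -/
def pt (F : Pt3 → ℝ) : Pt3 → ℝ := fun p => deriv (fun s => F (p.1, p.2.1, s)) p.2.2

/-- The KP equation with self-consistent sources (KPESCS). -/
def SolvesKPESCS (N : ℕ) (u : Pt3 → ℝ) (q r : Fin N → Pt3 → ℝ) : Prop :=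
  (∀ p : Pt3,
      px (fun p' => 4 * pt u p' - 6 * u p' * px u p' - px (px (px u)) p'
            + 8 * px (fun p'' => ∑ j, q j p'' * r j p'') p') p
        - 3 * py (py u) p = 0) ∧
  (∀ j, ∀ p : Pt3, py (q j) p = px (px (q j)) p + u p * q j p) ∧
  (∀ j, ∀ p : Pt3, py (r j) p = -(px (px (r j)) p) - u p * r j p)

/-- An adjoint eigenfunction datum `(g, V, R₁, …, R_N)` for a solution of the KPESCS. -/
def KPAdjointDatum (N : ℕ) (u : Pt3 → ℝ) (q r : Fin N → Pt3 → ℝ)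
    (g V : Pt3 → ℝ) (R : Fin N → Pt3 → ℝ) : Prop :=
  (∀ p : Pt3, px V p = py u p) ∧
  (∀ j, ∀ p : Pt3, px (R j) p = q j p * g p) ∧
  (∀ j, ∀ p : Pt3, py (R j) p = px (q j) p * g p - q j p * px g p) ∧
  (∀ p : Pt3, py g p = -(px (px g) p) - u p * g p) ∧
  (∀ p : Pt3, pt g p = px (px (px g)) p + (3/2) * u p * px g p
      + (3/4) * (px u p - V p) * g p + ∑ j, r j p * R j p)

def D (v : Pt3) (F : Pt3 → ℝ) : Pt3 → ℝ := fun p => fderiv ℝ F p v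

abbrev e1 : Pt3 := (1,0,0)
abbrev e2 : Pt3 := (0,1,0)
abbrev e3 : Pt3 := (0,0,1)

theorem px_eq {F : Pt3 → ℝ} (hF : ContDiff ℝ (⊤ : ℕ∞) F) : px F = D e1 F := by
  funext p
  have h1 : HasDerivAt (fun s : ℝ => ((s, p.2.1, p.2.2) : Pt3)) e1 p.1 :=
    (hasDerivAt_id p.1).prodMk ((hasDerivAt_const p.1 (p.2.1, p.2.2)))
  have h2 := ((hF.differentiable (by simp)) p).hasFDerivAt.comp_hasDerivAt p.1 h1
  exact h2.deriv

theorem py_eq {F : Pt3 → ℝ} (hF : ContDiff ℝ (⊤ : ℕ∞) F) : py F = D e2 F := by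
  funext p
  have h1 : HasDerivAt (fun s : ℝ => ((p.1, s, p.2.2) : Pt3)) e2 p.2.1 :=
    (hasDerivAt_const p.2.1 p.1).prodMk ((hasDerivAt_id p.2.1).prodMk (hasDerivAt_const _ _))
  have h2 := ((hF.differentiable (by simp)) p).hasFDerivAt.comp_hasDerivAt p.2.1 h1
  exact h2.deriv

theorem pt_eq {F : Pt3 → ℝ} (hF : ContDiff ℝ (⊤ : ℕ∞) F) : pt F = D e3 F := by
  funext p
  have h1 : HasDerivAt (fun s : ℝ => ((p.1, p.2.1, s) : Pt3)) e3 p.2.2 :=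
    (hasDerivAt_const p.2.2 p.1).prodMk ((hasDerivAt_const _ _).prodMk (hasDerivAt_id p.2.2))
  have h2 := ((hF.differentiable (by simp)) p).hasFDerivAt.comp_hasDerivAt p.2.2 h1
  exact h2.deriv

theorem D_contDiff {F : Pt3 → ℝ} (v : Pt3) (hF : ContDiff ℝ (⊤ : ℕ∞) F) : ContDiff ℝ (⊤ : ℕ∞) (D v F) :=
  (hF.fderiv_right (by simp)).clm_apply contDiff_const

theorem D_comm {F : Pt3 → ℝ} (hF : ContDiff ℝ (⊤ : ℕ∞) F) (v w : Pt3) : D v (D w F) = D w (D v F) := by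
  funext p
  have hΦ : Differentiable ℝ (fderiv ℝ F) := (hF.fderiv_right (m := (⊤ : ℕ∞)) (by simp)).differentiable (by simp)
  have key : ∀ a b : Pt3, D a (D b F) p = fderiv ℝ (fderiv ℝ F) p a b := by
    intro a b
    have h := ((hΦ p).hasFDerivAt).clm_apply (hasFDerivAt_const b p)
    have h2 := h.fderiv
    have h3 : D a (D b F) p = fderiv ℝ (fun y => (fderiv ℝ F y) b) p a := rfl
    rw [h3, h2]
    simp
  rw [key, key]
  exact second_derivative_symmetric (fun y => ((hF.differentiable (by simp)) y).hasFDerivAt)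
    (hΦ p).hasFDerivAt v w

theorem D_fun_add {F G : Pt3 → ℝ} (v : Pt3) (hF : ContDiff ℝ (⊤ : ℕ∞) F) (hG : ContDiff ℝ (⊤ : ℕ∞) G) :
    D v (fun p => F p + G p) = fun p => D v F p + D v G p := by
  funext p
  simp only [D]
  rw [fderiv_fun_add ((hF.differentiable (by simp)) p) ((hG.differentiable (by simp)) p)]
  simp

theorem D_fun_mul {F G : Pt3 → ℝ} (v : Pt3) (hF : ContDiff ℝ (⊤ : ℕ∞) F) (hG : ContDiff ℝ (⊤ : ℕ∞) G) :
    D v (fun p => F p * G p) = fun p => D v F p * G p + F p * D v G p := by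
  funext p
  simp only [D]
  rw [fderiv_fun_mul ((hF.differentiable (by simp)) p) ((hG.differentiable (by simp)) p)]
  simp
  ring

theorem D_fun_const (v : Pt3) (c : ℝ) : D v (fun _ => c) = fun _ => 0 := by
  funext p; simp [D]

theorem D_fun_inv {G : Pt3 → ℝ} (v : Pt3) (hG : ContDiff ℝ (⊤ : ℕ∞) G) (hG0 : ∀ p, G p ≠ 0) :
    D v (fun p => (G p)⁻¹) = fun p => -(D v G p / G p ^ 2) := by
  funext p
  have hinv : HasDerivAt (fun x : ℝ => x⁻¹) (-(G p ^ 2)⁻¹) (G p) := hasDerivAt_inv (hG0 p)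
  have h := hinv.comp_hasFDerivAt p ((hG.differentiable (by simp)) p).hasFDerivAt
  have h2 : fderiv ℝ (fun p => (G p)⁻¹) p = -(G p ^ 2)⁻¹ • fderiv ℝ G p := h.fderiv
  simp only [D, h2]
  simp
  ring

theorem D_fun_div {F G : Pt3 → ℝ} (v : Pt3) (hF : ContDiff ℝ (⊤ : ℕ∞) F) (hG : ContDiff ℝ (⊤ : ℕ∞) G)
    (hG0 : ∀ p, G p ≠ 0) :
    D v (fun p => F p / G p) = fun p => (D v F p * G p - F p * D v G p) / G p ^ 2 := by
  have h1 : (fun p => F p / G p) = fun p => F p * (G p)⁻¹ := by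
    funext p; rw [div_eq_mul_inv]
  rw [h1, D_fun_mul (G := fun p => (G p)⁻¹) v hF (hG.inv hG0), D_fun_inv v hG hG0]
  funext p
  have hg := hG0 p
  rw [eq_div_iff (pow_ne_zero 2 hg)]
  field_simp
  ring

theorem D_fun_sum {ι : Type*} (s : Finset ι) (F : ι → Pt3 → ℝ) (v : Pt3)
    (hF : ∀ i, ContDiff ℝ (⊤ : ℕ∞) (F i)) :
    D v (fun p => ∑ i ∈ s, F i p) = fun p => ∑ i ∈ s, D v (F i) p := by
  funext p
  simp only [D]
  rw [fderiv_fun_sum (fun i _ => (hF i).differentiable (by simp) p)]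
  simp

inductive Expr (ι : Type) where
  | atom : ι → Expr ι
  | const : ℝ → Expr ι
  | add : Expr ι → Expr ι → Expr ι
  | mul : Expr ι → Expr ι → Expr ι

namespace Expr

def eval {ι : Type} (A : ι → Pt3 → ℝ) : Expr ι → Pt3 → ℝ
  | atom i => A i
  | const c => fun _ => c
  | add a b => fun p => a.eval A p + b.eval A p
  | mul a b => fun p => a.eval A p * b.eval A p

def ederiv {ι : Type} (d : ι → Expr ι) : Expr ι → Expr ι
  | atom i => d i
  | const _ => const 0
  | add a b => add (ederiv d a) (ederiv d b)
  | mul a b => add (mul (ederiv d a) b) (mul a (ederiv d b))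

theorem eval_contDiff {ι : Type} {A : ι → Pt3 → ℝ} (hA : ∀ i, ContDiff ℝ (⊤ : ℕ∞) (A i)) :
    ∀ e : Expr ι, ContDiff ℝ (⊤ : ℕ∞) (e.eval A)
  | atom i => hA i
  | const _ => contDiff_const
  | add a b => (eval_contDiff hA a).add (eval_contDiff hA b)
  | mul a b => (eval_contDiff hA a).mul (eval_contDiff hA b)

theorem D_eval {ι : Type} (v : Pt3) {A : ι → Pt3 → ℝ} {d : ι → Expr ι}
    (hA : ∀ i, ContDiff ℝ (⊤ : ℕ∞) (A i)) (hd : ∀ i, D v (A i) = (d i).eval A) :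
    ∀ e : Expr ι, D v (e.eval A) = ((e.ederiv d).eval A)
  | atom i => hd i
  | const c => D_fun_const v c
  | add a b => by
      have h := D_fun_add v (eval_contDiff hA a) (eval_contDiff hA b)
      have ha := D_eval v hA hd a
      have hb := D_eval v hA hd b
      show D v (fun p => a.eval A p + b.eval A p) = fun p => ((a.ederiv d).eval A) p + ((b.ederiv d).eval A) p
      rw [h, ha, hb]
  | mul a b => by
      have h := D_fun_mul v (eval_contDiff hA a) (eval_contDiff hA b)
      have ha := D_eval v hA hd a
      have hb := D_eval v hA hd b
      show D v (fun p => a.eval A p * b.eval A p)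
        = fun p => ((a.ederiv d).eval A) p * b.eval A p + a.eval A p * ((b.ederiv d).eval A) p
      rw [h, ha, hb]

end Expr

def Dxn : ℕ → (Pt3 → ℝ) → Pt3 → ℝ
  | 0, F => F
  | n+1, F => D e1 (Dxn n F)

def Dyn : ℕ → (Pt3 → ℝ) → Pt3 → ℝ
  | 0, F => F
  | n+1, F => D e2 (Dyn n F)

theorem Dxn_contDiff {F : Pt3 → ℝ} (hF : ContDiff ℝ (⊤ : ℕ∞) F) : ∀ n, ContDiff ℝ (⊤ : ℕ∞) (Dxn n F)
  | 0 => hF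
  | n+1 => D_contDiff e1 (Dxn_contDiff hF n)

theorem Dyn_contDiff {F : Pt3 → ℝ} (hF : ContDiff ℝ (⊤ : ℕ∞) F) : ∀ n, ContDiff ℝ (⊤ : ℕ∞) (Dyn n F)
  | 0 => hF
  | n+1 => D_contDiff e2 (Dyn_contDiff hF n)

theorem D_Dxn_comm {F : Pt3 → ℝ} (hF : ContDiff ℝ (⊤ : ℕ∞) F) (v : Pt3) :
    ∀ n, D v (Dxn n F) = Dxn n (D v F)
  | 0 => rfl
  | n+1 => by
      show D v (D e1 (Dxn n F)) = D e1 (Dxn n (D v F))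
      rw [D_comm (Dxn_contDiff hF n) v e1, D_Dxn_comm hF v n]

/-! ### Atoms and symbolic expressions for the Bäcklund computation -/

inductive Atm where
  | aU : ℕ → ℕ → Atm   -- ∂ₓ^i ∂_y^j u
  | aW : ℕ → Atm       -- ∂ₓ^i w,  w = gₓ/g
  | aG : Atm           -- g
  | aV : Atm           -- V
  | aB : ℕ → ℕ → Atm   -- ∑ⱼ ∂ₓ^a qⱼ · ∂ₓ^b rⱼ
  | aC : ℕ → Atm       -- ∑ⱼ (Rⱼ/g) · ∂ₓ^b rⱼ

open Expr in
def eU (i j : ℕ) : Expr Atm := atom (.aU i j)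
open Expr in
def eW (i : ℕ) : Expr Atm := atom (.aW i)
def eG : Expr Atm := .atom .aG
def eV : Expr Atm := .atom .aV
def eB (a b : ℕ) : Expr Atm := .atom (.aB a b)
def eC (b : ℕ) : Expr Atm := .atom (.aC b)
def emm (a b : Expr Atm) : Expr Atm := .mul a b
def ea (a b : Expr Atm) : Expr Atm := .add a b
def es (c : ℝ) (a : Expr Atm) : Expr Atm := .mul (.const c) a
def eaL (l : List (Expr Atm)) : Expr Atm := l.foldr ea (.const 0)

def gxE : Expr Atm := emm (eW 0) eG

/-- x-derivation table (the true one). -/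
def dX : Atm → Expr Atm
  | .aU i j => eU (i+1) j
  | .aW i => eW (i+1)
  | .aG => gxE
  | .aV => eU 0 1
  | .aB a b => ea (eB (a+1) b) (eB a (b+1))
  | .aC b => eaL [eB 0 b, es (-1) (emm (eW 0) (eC b)), eC (b+1)]

/-- x-derivation table for the zero-padded assignment (only u/w atoms live). -/
def dXz : Atm → Expr Atm
  | .aU i j => eU (i+1) j
  | .aW i => eW (i+1)
  | _ => .const 0

def wyE : Expr Atm := eaL [es (-1) (eW 2), es (-2) (emm (eW 0) (eW 1)), es (-1) (eU 1 0)]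

def dYW : ℕ → Expr Atm
  | 0 => wyE
  | i+1 => Expr.ederiv dXz (dYW i)

/-- y-derivation table (for the zero-padded assignment). -/
def dY : Atm → Expr Atm
  | .aU i j => eU i (j+1)
  | .aW i => dYW i
  | _ => .const 0

def wtE : Expr Atm := eaL [eW 3, es 3 (emm (eW 1) (eW 1)), es 3 (emm (eW 0) (eW 2)),
  es 3 (emm (eW 0) (emm (eW 0) (eW 1))), es (3/2) (emm (eU 1 0) (eW 0)),
  es (3/2) (emm (eU 0 0) (eW 1)), es (3/4) (eU 2 0), es (-3/4) (eU 0 1),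
  eB 0 0, es (-1) (emm (eW 0) (eC 0)), eC 1]

def ekpE : Expr Atm := es (1/4) (eaL [es 3 (eU 0 2), es 6 (emm (eU 1 0) (eU 1 0)),
  es 6 (emm (eU 0 0) (eU 2 0)), eU 4 0, es (-8) (eaL [eB 2 0, es 2 (eB 1 1), eB 0 2])])

def restE : Expr Atm := eaL [es (-6) (emm (eU 0 0) (eU 1 0)), es (-1) (eU 3 0),
  es 8 (ea (eB 1 0) (eB 0 1))]

def uTE : Expr Atm := ea (eU 0 0) (es 2 (eW 1))

def sumE : Expr Atm := ea (emm (eW 0) (eC 0)) (es (-1) (eC 1))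

def gyE : Expr Atm := ea (es (-1) (Expr.ederiv dX gxE)) (es (-1) (emm (eU 0 0) eG))

def gtE : Expr Atm := eaL [Expr.ederiv dX (Expr.ederiv dX gxE), es (3/2) (emm (eU 0 0) gxE),
  es (3/4) (emm (ea (eU 1 0) (es (-1) eV)) eG), emm (eC 0) eG]

def bigRestE : Expr Atm := eaL [es 8 (Expr.ederiv dX wtE),
  es (-6) (emm uTE (Expr.ederiv dX uTE)),
  es (-1) (Expr.ederiv dX (Expr.ederiv dX (Expr.ederiv dX uTE))),
  es 8 (Expr.ederiv dX sumE)]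

def yyE : Expr Atm := Expr.ederiv dY (Expr.ederiv dY uTE)

def W0F (g : Pt3 → ℝ) : Pt3 → ℝ := fun p => D e1 g p / g p

/-- the genuine atom assignment -/
def AXf {N : ℕ} (u g V : Pt3 → ℝ) (q r R : Fin N → Pt3 → ℝ) : Atm → Pt3 → ℝ
  | .aU i j => Dxn i (Dyn j u)
  | .aW i => Dxn i (W0F g)
  | .aG => g
  | .aV => V
  | .aB a b => fun p => ∑ j, Dxn a (q j) p * Dxn b (r j) p
  | .aC b => fun p => ∑ j, (R j p / g p) * Dxn b (r j) p

/-- zero-padded assignment, used for the y-direction where sources never appear -/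
def AYf (u g : Pt3 → ℝ) : Atm → Pt3 → ℝ
  | .aU i j => Dxn i (Dyn j u)
  | .aW i => Dxn i (W0F g)
  | _ => fun _ => 0

theorem D_fun_neg {F : Pt3 → ℝ} (v : Pt3) :
    D v (fun p => -(F p)) = fun p => -(D v F p) := by
  funext p; simp only [D, fderiv_neg]; simp

theorem D_fun_sub {F G : Pt3 → ℝ} (v : Pt3) (hF : ContDiff ℝ (⊤ : ℕ∞) F) (hG : ContDiff ℝ (⊤ : ℕ∞) G) :
    D v (fun p => F p - G p) = fun p => D v F p - D v G p := by
  funext p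
  simp only [D]
  rw [fderiv_fun_sub ((hF.differentiable (by simp)) p) ((hG.differentiable (by simp)) p)]
  simp

theorem D_fun_const_mul {F : Pt3 → ℝ} (v : Pt3) (c : ℝ) (hF : ContDiff ℝ (⊤ : ℕ∞) F) :
    D v (fun p => c * F p) = fun p => c * D v F p := by
  funext p
  simp only [D]
  rw [fderiv_const_mul ((hF.differentiable (by simp)) p) c]
  simp

theorem sum_split3 {α : Type*} (s : Finset α) (A B C : α → ℝ) :
    ∑ j ∈ s, (A j + B j + C j) = (∑ j ∈ s, A j) + (∑ j ∈ s, B j) + (∑ j ∈ s, C j) := by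
  rw [Finset.sum_add_distrib, Finset.sum_add_distrib]

theorem sum_split2 {α : Type*} (s : Finset α) (A B : α → ℝ) :
    ∑ j ∈ s, (A j + B j) = (∑ j ∈ s, A j) + (∑ j ∈ s, B j) := by
  rw [Finset.sum_add_distrib]

theorem kpescs_autoBacklund_T2 (N : ℕ) (u g V : Pt3 → ℝ) (q r R : Fin N → Pt3 → ℝ)
    (hu : ContDiff ℝ (⊤ : ℕ∞) u) (hq : ∀ j, ContDiff ℝ (⊤ : ℕ∞) (q j)) (hr : ∀ j, ContDiff ℝ (⊤ : ℕ∞) (r j))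
    (hg : ContDiff ℝ (⊤ : ℕ∞) g) (hV : ContDiff ℝ (⊤ : ℕ∞) V) (hR : ∀ j, ContDiff ℝ (⊤ : ℕ∞) (R j))
    (hsol : SolvesKPESCS N u q r)
    (hdat : KPAdjointDatum N u q r g V R)
    (hg0 : ∀ p : Pt3, g p ≠ 0) :
    SolvesKPESCS N
      (fun p => u p + 2 * px (fun p' => px g p' / g p') p)
      (fun j => fun p => R j p / g p)
      (fun j => fun p => -(g p * px (fun p' => r j p' / g p') p)) := by
  obtain ⟨hKPu, hqy, hry⟩ := hsol
  obtain ⟨hVx, hRx, hRy, hgy, hgt⟩ := hdat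
  have hW0 : ContDiff ℝ (⊤ : ℕ∞) (W0F g) := (D_contDiff e1 hg).div hg hg0
  have hSf : ∀ j : Fin N, ContDiff ℝ (⊤ : ℕ∞) (fun p => R j p / g p) := fun j => (hR j).div hg hg0
  -- hypotheses in directional-derivative form
  have hVxD : D e1 V = D e2 u := by
    have h : px V = py u := funext hVx
    rwa [px_eq hV, py_eq hu] at h
  have hRxD : ∀ j, D e1 (R j) = fun p => q j p * g p := fun j => by
    have h : px (R j) = fun p => q j p * g p := funext (hRx j)
    rwa [px_eq (hR j)] at h
  have hRyD : ∀ j, D e2 (R j) = fun p => D e1 (q j) p * g p - q j p * D e1 g p := fun j => by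
    have h : py (R j) = fun p => px (q j) p * g p - q j p * px g p := funext (hRy j)
    rwa [py_eq (hR j), px_eq (hq j), px_eq hg] at h
  have hgyD : D e2 g = fun p => -(D e1 (D e1 g) p) - u p * g p := by
    have h : py g = fun p => -(px (px g) p) - u p * g p := funext hgy
    rwa [py_eq hg, px_eq hg, px_eq (D_contDiff e1 hg)] at h
  have hgtD : D e3 g = fun p => D e1 (D e1 (D e1 g)) p + (3/2) * u p * D e1 g p
      + (3/4) * (D e1 u p - V p) * g p + ∑ j, r j p * R j p := by
    have h : pt g = fun p => px (px (px g)) p + (3/2) * u p * px g p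
        + (3/4) * (px u p - V p) * g p + ∑ j, r j p * R j p := funext hgt
    rwa [pt_eq hg, px_eq hg, px_eq (D_contDiff e1 hg),
      px_eq (D_contDiff e1 (D_contDiff e1 hg)), px_eq hu] at h
  have hryD : ∀ j, D e2 (r j) = fun p => -(D e1 (D e1 (r j)) p) - u p * r j p := fun j => by
    have h : py (r j) = fun p => -(px (px (r j)) p) - u p * r j p := funext (hry j)
    rwa [py_eq (hr j), px_eq (hr j), px_eq (D_contDiff e1 (hr j))] at h
  -- basic g and w = gₓ/g facts
  have hgx_p : ∀ p, D e1 g p = W0F g p * g p := fun p => by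
    simp only [W0F]; rw [div_mul_cancel₀ _ (hg0 p)]
  have hgxF : D e1 g = fun p => W0F g p * g p := funext hgx_p
  have hgxxF : D e1 (D e1 g) = fun p => (D e1 (W0F g) p + W0F g p * W0F g p) * g p := by
    rw [hgxF, D_fun_mul e1 hW0 hg]
    funext p; simp only [hgx_p]; ring
  have hgxx_p : ∀ p, D e1 (D e1 g) p
      = (D e1 (W0F g) p + W0F g p * W0F g p) * g p := fun p => by rw [hgxxF]
  have hgxxxF : D e1 (D e1 (D e1 g)) = fun p =>
      (D e1 (D e1 (W0F g)) p + 3 * W0F g p * D e1 (W0F g) p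
        + W0F g p * W0F g p * W0F g p) * g p := by
    rw [hgxxF, D_fun_mul e1 ((D_contDiff e1 hW0).add (hW0.mul hW0)) hg,
      D_fun_add e1 (D_contDiff e1 hW0) (hW0.mul hW0), D_fun_mul e1 hW0 hW0]
    funext p; simp only [hgx_p]; ring
  have hgxxx_p : ∀ p, D e1 (D e1 (D e1 g)) p = (D e1 (D e1 (W0F g)) p
      + 3 * W0F g p * D e1 (W0F g) p + W0F g p * W0F g p * W0F g p) * g p :=
    fun p => by rw [hgxxxF]
  have hgy_p : ∀ p, D e2 g p = -(D e1 (D e1 g) p) - u p * g p := fun p => by rw [hgyD]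
  have hgyxF : D e1 (D e2 g) = fun p => -(D e1 (D e1 (D e1 g)) p)
      - (D e1 u p * g p + u p * D e1 g p) := by
    rw [hgyD, D_fun_sub e1 ((D_contDiff e1 (D_contDiff e1 hg)).neg) (hu.mul hg),
      D_fun_neg e1, D_fun_mul e1 hu hg]
  have hgyx_p : ∀ p, D e1 (D e2 g) p = -(D e1 (D e1 (D e1 g)) p)
      - (D e1 u p * g p + u p * D e1 g p) := fun p => by rw [hgyxF]
  -- w_y identity
  have hwyF : D e2 (W0F g) = fun p => -(D e1 (D e1 (W0F g)) p)
      - 2 * W0F g p * D e1 (W0F g) p - D e1 u p := by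
    have h0 : D e2 (W0F g) = D e2 (fun p => D e1 g p / g p) := rfl
    rw [h0, D_fun_div e2 (D_contDiff e1 hg) hg hg0]
    funext p
    rw [show D e2 (D e1 g) = D e1 (D e2 g) from D_comm hg e2 e1]
    simp only [hgyx_p, hgxxx_p, hgxx_p, hgy_p, hgx_p]
    have hgp := hg0 p
    field_simp
    ring
  -- eigenfunction S = R/g facts
  have hSxF : ∀ j, D e1 (fun p => R j p / g p)
      = fun p => q j p - (R j p / g p) * W0F g p := fun j => by
    rw [D_fun_div e1 (hR j) hg hg0]
    funext p
    simp only [hRxD j, hgx_p]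
    have hgp := hg0 p
    field_simp
  have hSx_p : ∀ j p, D e1 (fun p => R j p / g p) p
      = q j p - (R j p / g p) * W0F g p := fun j p => by rw [hSxF j]
  -- atom assignments
  have hAX : ∀ i, ContDiff ℝ (⊤ : ℕ∞) (AXf u g V q r R i) := by
    intro i
    match i with
    | .aU i j => exact Dxn_contDiff (Dyn_contDiff hu j) i
    | .aW i => exact Dxn_contDiff hW0 i
    | .aG => exact hg
    | .aV => exact hV
    | .aB a b => exact ContDiff.sum fun j _ => (Dxn_contDiff (hq j) a).mul (Dxn_contDiff (hr j) b)
    | .aC b => exact ContDiff.sum fun j _ => (hSf j).mul (Dxn_contDiff (hr j) b)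
  have hAY : ∀ i, ContDiff ℝ (⊤ : ℕ∞) (AYf u g i) := by
    intro i
    match i with
    | .aU i j => exact Dxn_contDiff (Dyn_contDiff hu j) i
    | .aW i => exact Dxn_contDiff hW0 i
    | .aG => exact contDiff_const
    | .aV => exact contDiff_const
    | .aB a b => exact contDiff_const
    | .aC b => exact contDiff_const
  have hgxE : D e1 g = Expr.eval (AXf u g V q r R) gxE := by
    funext p
    rw [hgx_p p]
    simp [Expr.eval, gxE, emm, eW, eG, AXf, Dxn]
  have hB : ∀ a b, D e1 (AXf u g V q r R (.aB a b))
      = Expr.eval (AXf u g V q r R) (dX (.aB a b)) := by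
    intro a b
    show D e1 (fun p => ∑ j, Dxn a (q j) p * Dxn b (r j) p) = _
    rw [D_fun_sum Finset.univ (fun j p => Dxn a (q j) p * Dxn b (r j) p) e1
      (fun j => (Dxn_contDiff (hq j) a).mul (Dxn_contDiff (hr j) b))]
    funext p
    simp only [Expr.eval, dX, ea, eB, AXf]
    rw [← Finset.sum_add_distrib]
    refine Finset.sum_congr rfl fun j _ => ?_
    rw [D_fun_mul e1 (Dxn_contDiff (hq j) a) (Dxn_contDiff (hr j) b)]
    rfl
  have hC : ∀ b, D e1 (AXf u g V q r R (.aC b))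
      = Expr.eval (AXf u g V q r R) (dX (.aC b)) := by
    intro b
    show D e1 (fun p => ∑ j, (R j p / g p) * Dxn b (r j) p) = _
    rw [D_fun_sum Finset.univ (fun j p => (R j p / g p) * Dxn b (r j) p) e1
      (fun j => (hSf j).mul (Dxn_contDiff (hr j) b))]
    funext p
    simp only [Expr.eval, dX, eaL, List.foldr, ea, es, emm, eB, eC, eW, AXf]
    have hsummand : ∀ j ∈ Finset.univ (α := Fin N),
        D e1 (fun p => (R j p / g p) * Dxn b (r j) p) p
        = Dxn 0 (q j) p * Dxn b (r j) p
          + (-1 * W0F g p) * ((R j p / g p) * Dxn b (r j) p)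
          + (R j p / g p) * Dxn (b+1) (r j) p := by
      intro j _
      rw [D_fun_mul e1 (hSf j) (Dxn_contDiff (hr j) b)]
      simp only [hSx_p j]
      show _ = q j p * Dxn b (r j) p + _ + (R j p / g p) * D e1 (Dxn b (r j)) p
      ring
    rw [Finset.sum_congr rfl hsummand, sum_split3, ← Finset.mul_sum]
    simp only [Dxn]
    ring
  -- derivation tables are faithful
  have hdXr : ∀ i, D e1 (AXf u g V q r R i) = Expr.eval (AXf u g V q r R) (dX i) := by
    intro i
    match i with
    | .aU i j => rfl
    | .aW i => rfl
    | .aG => exact hgxE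
    | .aV => exact hVxD
    | .aB a b => exact hB a b
    | .aC b => exact hC b
  have hdXzY : ∀ i, D e1 (AYf u g i) = Expr.eval (AYf u g) (dXz i) := by
    intro i
    match i with
    | .aU i j => rfl
    | .aW i => rfl
    | .aG => exact D_fun_const e1 0
    | .aV => exact D_fun_const e1 0
    | .aB a b => exact D_fun_const e1 0
    | .aC b => exact D_fun_const e1 0
  have hwyY : D e2 (W0F g) = Expr.eval (AYf u g) wyE := by
    rw [hwyF]
    funext p
    simp [Expr.eval, wyE, eaL, List.foldr, ea, es, emm, eW, eU, AYf, Dxn, Dyn]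
    ring
  have hdYW : ∀ i, D e2 (Dxn i (W0F g)) = Expr.eval (AYf u g) (dYW i) := by
    intro i
    induction i with
    | zero => exact hwyY
    | succ n ih =>
      show D e2 (D e1 (Dxn n (W0F g))) = _
      rw [D_comm (Dxn_contDiff hW0 n) e2 e1, ih]
      exact Expr.D_eval e1 hAY hdXzY (dYW n)
  have hdYr : ∀ i, D e2 (AYf u g i) = Expr.eval (AYf u g) (dY i) := by
    intro i
    match i with
    | .aU i j =>
      show D e2 (Dxn i (Dyn j u)) = _
      rw [D_Dxn_comm (Dyn_contDiff hu j) e2 i]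
      rfl
    | .aW i => exact hdYW i
    | .aG => exact D_fun_const e2 0
    | .aV => exact D_fun_const e2 0
    | .aB a b => exact D_fun_const e2 0
    | .aC b => exact D_fun_const e2 0
  -- the t-derivative of g and of w
  have hgxxE : D e1 (D e1 g) = Expr.eval (AXf u g V q r R) (Expr.ederiv dX gxE) := by
    rw [hgxE]; exact Expr.D_eval e1 hAX hdXr gxE
  have hgxxxE : D e1 (D e1 (D e1 g))
      = Expr.eval (AXf u g V q r R) (Expr.ederiv dX (Expr.ederiv dX gxE)) := by
    rw [hgxxE]; exact Expr.D_eval e1 hAX hdXr _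
  have hRsum : ∀ p, ∑ j, r j p * R j p
      = Expr.eval (AXf u g V q r R) (emm (eC 0) eG) p := fun p => by
    simp only [Expr.eval, emm, eC, eG, AXf]
    rw [Finset.sum_mul]
    refine Finset.sum_congr rfl fun j _ => ?_
    simp only [Dxn]
    rw [div_mul_eq_mul_div, div_mul_eq_mul_div, mul_div_assoc, div_self (hg0 p), mul_one]
    ring
  have hgtE : D e3 g = Expr.eval (AXf u g V q r R) gtE := by
    rw [hgtD]
    funext p
    rw [congrFun hgxxxE p, hRsum p, hgx_p p]
    simp only [Expr.eval, gtE, gxE, eaL, List.foldr, es, emm, ea, eU, eV, eC, eG, eW, AXf, Dxn, Dyn]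
    ring_nf
    simp only [mul_comm (g p)⁻¹]
  have hD1gtE : D e1 (D e3 g) = Expr.eval (AXf u g V q r R) (Expr.ederiv dX gtE) := by
    rw [hgtE]; exact Expr.D_eval e1 hAX hdXr gtE
  have hwtF : D e3 (W0F g) = Expr.eval (AXf u g V q r R) wtE := by
    have h0 : D e3 (W0F g) = D e3 (fun p => D e1 g p / g p) := rfl
    rw [h0, D_fun_div e3 (D_contDiff e1 hg) hg hg0]
    funext p
    rw [show D e3 (D e1 g) = D e1 (D e3 g) from D_comm hg e3 e1]
    rw [congrFun hD1gtE p, congrFun hgtE p, congrFun hgxE p]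
    have hgp := hg0 p
    rw [div_eq_iff (pow_ne_zero 2 hgp)]
    simp only [Expr.eval, Expr.ederiv, dX, wtE, gtE, gxE, eaL, List.foldr, es, emm, ea,
      eU, eV, eC, eG, eB, eW, AXf, Dxn, Dyn]
    ring
  -- extract ∂ₓ∂ₜu from the KP equation for u
  have hMf : (fun p'' => ∑ j, q j p'' * r j p'') = AXf u g V q r R (Atm.aB 0 0) := rfl
  have hFu : (fun p' => 4 * pt u p' - 6 * u p' * px u p' - px (px (px u)) p'
        + 8 * px (fun p'' => ∑ j, q j p'' * r j p'') p')
      = fun p' => 4 * D e3 u p' + Expr.eval (AXf u g V q r R) restE p' := by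
    rw [pt_eq hu, px_eq hu, px_eq (D_contDiff e1 hu), px_eq (D_contDiff e1 (D_contDiff e1 hu)),
      hMf, px_eq (hAX (Atm.aB 0 0)), hdXr (Atm.aB 0 0)]
    funext p'
    simp only [Expr.eval, restE, dX, eaL, List.foldr, es, emm, ea, eU, eB, AXf, Dxn, Dyn]
    ring
  have hKP2 : ∀ p, 4 * D e1 (D e3 u) p
      + Expr.eval (AXf u g V q r R) (Expr.ederiv dX restE) p - 3 * D e2 (D e2 u) p = 0 := by
    intro p
    have h := hKPu p
    rw [hFu] at h
    simp only [px_eq ((contDiff_const.mul (D_contDiff e3 hu)).add (Expr.eval_contDiff hAX restE)),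
      D_fun_add e1 (contDiff_const.mul (D_contDiff e3 hu)) (Expr.eval_contDiff hAX restE),
      D_fun_const_mul e1 4 (D_contDiff e3 hu), Expr.D_eval e1 hAX hdXr restE,
      py_eq hu, py_eq (D_contDiff e2 hu)] at h
    linarith [h]
  have hEid : ∀ p, 4 * Expr.eval (AXf u g V q r R) ekpE p
      = 3 * D e2 (D e2 u) p - Expr.eval (AXf u g V q r R) (Expr.ederiv dX restE) p := by
    intro p
    simp only [Expr.eval, Expr.ederiv, ekpE, restE, dX, eaL, List.foldr, es, emm, ea, eU, eB,
      AXf, Dxn, Dyn]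
    ring
  have hUT1 : D e1 (D e3 u) = Expr.eval (AXf u g V q r R) ekpE := by
    funext p
    have h1 := hKP2 p
    have h2 := hEid p
    linarith
  have hwlam : px (fun p' => px g p' / g p') = D e1 (W0F g) := by
    rw [px_eq hg, show (fun p' => D e1 g p' / g p') = W0F g from rfl, px_eq hW0]
  have hrtF : ∀ j, (fun p => -(g p * px (fun p' => r j p' / g p') p))
      = fun p => r j p * W0F g p - D e1 (r j) p := fun j => by
    rw [px_eq (F := fun p' => r j p' / g p') ((hr j).div hg hg0), D_fun_div e1 (hr j) hg hg0]
    funext p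
    simp only [hgx_p]
    have hgp := hg0 p
    field_simp
    ring
  have hrt_p : ∀ j p, -(g p * px (fun p' => r j p' / g p') p)
      = r j p * W0F g p - D e1 (r j) p := fun j p => congrFun (hrtF j) p
  refine ⟨?_, ?_, ?_⟩
  · -- the KP equation with sources for ũ
    intro p
    simp only [hrt_p, hwlam]
    have hUc : ContDiff ℝ (⊤ : ℕ∞) (fun p => u p + 2 * D e1 (W0F g) p) :=
      hu.add (contDiff_const.mul (D_contDiff e1 hW0))
    have hUTEX : (fun p => u p + 2 * D e1 (W0F g) p)
        = Expr.eval (AXf u g V q r R) uTE := by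
      funext pp
      simp [Expr.eval, uTE, ea, es, eU, eW, AXf, Dxn, Dyn]
    have hUTEY : (fun p => u p + 2 * D e1 (W0F g) p)
        = Expr.eval (AYf u g) uTE := by
      funext pp
      simp [Expr.eval, uTE, ea, es, eU, eW, AYf, Dxn, Dyn]
    have hsumE : (fun p'' => ∑ j, R j p'' / g p'' * (r j p'' * W0F g p'' - D e1 (r j) p''))
        = Expr.eval (AXf u g V q r R) sumE := by
      funext pp
      simp only [Expr.eval, sumE, ea, es, emm, eC, eW, AXf, Dxn]
      have hs : ∀ j ∈ Finset.univ (α := Fin N),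
          R j pp / g pp * (r j pp * W0F g pp - D e1 (r j) pp)
          = W0F g pp * (R j pp / g pp * Dxn 0 (r j) pp)
            + (-1) * (R j pp / g pp * Dxn 1 (r j) pp) := by
        intro j _
        simp only [Dxn]
        ring
      rw [Finset.sum_congr rfl hs, sum_split2, ← Finset.mul_sum, ← Finset.mul_sum]
      simp only [Dxn]
    -- convert the y-side first
    rw [py_eq hUc, py_eq (D_contDiff e2 hUc)]
    have hY1 : D e2 (fun p => u p + 2 * D e1 (W0F g) p)
        = Expr.eval (AYf u g) (Expr.ederiv dY uTE) := by
      rw [hUTEY]; exact Expr.D_eval e2 hAY hdYr uTE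
    rw [hY1, Expr.D_eval e2 hAY hdYr (Expr.ederiv dY uTE)]
    -- convert the x/t-side
    rw [hUTEX, hsumE]
    rw [pt_eq (Expr.eval_contDiff hAX uTE), px_eq (Expr.eval_contDiff hAX uTE),
      px_eq (D_contDiff e1 (Expr.eval_contDiff hAX uTE)),
      px_eq (D_contDiff e1 (D_contDiff e1 (Expr.eval_contDiff hAX uTE))),
      px_eq (Expr.eval_contDiff hAX sumE)]
    have hDts : D e3 (Expr.eval (AXf u g V q r R) uTE)
        = fun pp => D e3 u pp + 2 * Expr.eval (AXf u g V q r R) (Expr.ederiv dX wtE) pp := by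
      rw [← hUTEX, D_fun_add e3 hu (contDiff_const.mul (D_contDiff e1 hW0)),
        D_fun_const_mul e3 2 (D_contDiff e1 hW0)]
      funext pp
      rw [show D e3 (D e1 (W0F g)) = D e1 (D e3 (W0F g)) from D_comm hW0 e3 e1, hwtF,
        Expr.D_eval e1 hAX hdXr wtE]
    rw [hDts, Expr.D_eval e1 hAX hdXr uTE,
      Expr.D_eval e1 hAX hdXr (Expr.ederiv dX uTE),
      Expr.D_eval e1 hAX hdXr (Expr.ederiv dX (Expr.ederiv dX uTE)),
      Expr.D_eval e1 hAX hdXr sumE]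
    have hBr : (fun p' =>
          4 * (fun pp => D e3 u pp
              + 2 * Expr.eval (AXf u g V q r R) (Expr.ederiv dX wtE) pp) p'
          - 6 * (u p' + 2 * D e1 (W0F g) p')
              * Expr.eval (AXf u g V q r R) (Expr.ederiv dX uTE) p'
          - Expr.eval (AXf u g V q r R) (Expr.ederiv dX (Expr.ederiv dX (Expr.ederiv dX uTE))) p'
          + 8 * Expr.eval (AXf u g V q r R) (Expr.ederiv dX sumE) p')
        = fun p' => 4 * D e3 u p' + Expr.eval (AXf u g V q r R) bigRestE p' := by
      funext p'
      simp only [Expr.eval, bigRestE, uTE, eaL, List.foldr, es, emm, ea, eU, eW, AXf, Dxn, Dyn]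
      ring
    rw [hBr, px_eq ((contDiff_const.mul (D_contDiff e3 hu)).add (Expr.eval_contDiff hAX bigRestE)),
      D_fun_add e1 (contDiff_const.mul (D_contDiff e3 hu)) (Expr.eval_contDiff hAX bigRestE),
      D_fun_const_mul e1 4 (D_contDiff e3 hu), hUT1, Expr.D_eval e1 hAX hdXr bigRestE]
    show 4 * Expr.eval (AXf u g V q r R) ekpE p
        + Expr.eval (AXf u g V q r R) (Expr.ederiv dX bigRestE) p
        - 3 * Expr.eval (AYf u g) (Expr.ederiv dY (Expr.ederiv dY uTE)) p = 0
    simp only [Expr.eval, Expr.ederiv, dX, dY, dXz, dYW, bigRestE, wtE, wyE, ekpE, uTE, sumE,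
      gxE, eaL, List.foldr, eU, eW, eG, eV, eB, eC, emm, ea, es, AXf, AYf, Dxn, Dyn,
      Nat.reduceAdd]
    ring
  · -- eigenfunction equation for q̃ = R/g
    intro j p
    simp only [hwlam]
    rw [py_eq (hSf j), px_eq (hSf j), px_eq (D_contDiff e1 (hSf j))]
    have hSyF : D e2 (fun p => R j p / g p)
        = fun p => (D e2 (R j) p * g p - R j p * D e2 g p) / g p ^ 2 :=
      D_fun_div e2 (hR j) hg hg0
    have hA1 : D e1 (D e1 (fun p => R j p / g p))
        = fun p => D e1 (q j) p - ((q j p - (R j p / g p) * W0F g p) * W0F g p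
            + (R j p / g p) * D e1 (W0F g) p) := by
      rw [hSxF j, D_fun_sub e1 (hq j) ((hSf j).mul hW0), D_fun_mul e1 (hSf j) hW0]
      funext pp
      simp only [hSx_p]
    rw [congrFun hSyF p, congrFun hA1 p]
    simp only [hSx_p, hRyD, hgy_p, hgxx_p, hgx_p]
    have hgp := hg0 p
    field_simp
    ring
  · -- eigenfunction equation for r̃ = -g (r/g)ₓ
    intro j p
    simp only [hrt_p, hwlam]
    have hRTc : ContDiff ℝ (⊤ : ℕ∞) (fun p => r j p * W0F g p - D e1 (r j) p) :=
      ((hr j).mul hW0).sub (D_contDiff e1 (hr j))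
    rw [py_eq hRTc, px_eq hRTc, px_eq (D_contDiff e1 hRTc)]
    have hRTx : D e1 (fun p => r j p * W0F g p - D e1 (r j) p)
        = fun p => (D e1 (r j) p * W0F g p + r j p * D e1 (W0F g) p)
            - D e1 (D e1 (r j)) p := by
      rw [D_fun_sub e1 ((hr j).mul hW0) (D_contDiff e1 (hr j)), D_fun_mul e1 (hr j) hW0]
    have hRTy : D e2 (fun p => r j p * W0F g p - D e1 (r j) p)
        = fun p => (D e2 (r j) p * W0F g p + r j p * D e2 (W0F g) p)
            - D e1 (D e2 (r j)) p := by
      rw [D_fun_sub e2 ((hr j).mul hW0) (D_contDiff e1 (hr j)), D_fun_mul e2 (hr j) hW0]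
      funext pp
      rw [show D e2 (D e1 (r j)) = D e1 (D e2 (r j)) from D_comm (hr j) e2 e1]
    have hRTxx : D e1 (fun p => (D e1 (r j) p * W0F g p + r j p * D e1 (W0F g) p)
          - D e1 (D e1 (r j)) p)
        = fun p => ((D e1 (D e1 (r j)) p * W0F g p + D e1 (r j) p * D e1 (W0F g) p)
            + (D e1 (r j) p * D e1 (W0F g) p + r j p * D e1 (D e1 (W0F g)) p))
            - D e1 (D e1 (D e1 (r j))) p := by
      rw [D_fun_sub e1 (((D_contDiff e1 (hr j)).mul hW0).add ((hr j).mul (D_contDiff e1 hW0)))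
          (D_contDiff e1 (D_contDiff e1 (hr j))),
        D_fun_add e1 ((D_contDiff e1 (hr j)).mul hW0) ((hr j).mul (D_contDiff e1 hW0)),
        D_fun_mul e1 (D_contDiff e1 (hr j)) hW0, D_fun_mul e1 (hr j) (D_contDiff e1 hW0)]
    have hryx : D e1 (D e2 (r j)) = fun p => -(D e1 (D e1 (D e1 (r j))) p)
        - (D e1 u p * r j p + u p * D e1 (r j) p) := by
      rw [hryD j, D_fun_sub e1 (D_contDiff e1 (D_contDiff e1 (hr j))).neg (hu.mul (hr j)),
        D_fun_neg e1, D_fun_mul e1 hu (hr j)]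
    rw [hRTy, hRTx, hRTxx, hryx]
    simp only [hryD, hwyF]
    ring
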